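/- Every finitely generated torsion subgroup of GL(n, ℂ) is finite (Burnside–Schur theorem). -/

import Mathlib

/-- ℤ is a Jacobson ring. -/
lemma int_isJacobsonRing : IsJacobsonRing ℤ := by
  rw [isJacobsonRing_iff_prime_eq]
  intro P hP
  rcases eq_or_ne P ⊥ with rfl | hne
  · refine le_antisymm (fun x hx => ?_) Ideal.le_jacobson
    have h1 := Ideal.mem_jacobson_bot.mp hx 1
    have h2 := Ideal.mem_jacobson_bot.mp hx (-1)
    rw [Int.isUnit_iff] at h1 h2
    have : x = 0 := by omega
    simp [this]
  · haveI := IsPrime.to_maximal_ideal hne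
    exact Ideal.jacobson_eq_self_of_isMaximal

/-- A field that is module-finite over ℤ is finite. -/
lemma finite_of_field_moduleFinite_int (K : Type*) [Field K] [Module.Finite ℤ K] :
    Finite K := by
  haveI : CharP K (ringChar K) := ringChar.charP K
  rcases CharP.char_is_prime_or_zero K (ringChar K) with hp | h0
  · haveI : Fact (Nat.Prime (ringChar K)) := ⟨hp⟩
    letI : Algebra (ZMod (ringChar K)) K := ZMod.algebra _ _
    haveI : Module.Finite (ZMod (ringChar K)) K :=
      Module.Finite.of_restrictScalars_finite ℤ (ZMod (ringChar K)) K
    exact Module.finite_of_finite (ZMod (ringChar K))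
  · haveI : CharP K 0 := h0 ▸ ringChar.charP K
    haveI : CharZero K := CharP.charP_to_charZero K
    exfalso
    have hint : IsIntegral ℤ ((algebraMap ℚ K) (1/2 : ℚ)) := IsIntegral.of_finite ℤ _
    rw [isIntegral_algebraMap_iff (algebraMap ℚ K).injective] at hint
    obtain ⟨y, hy⟩ := IsIntegrallyClosed.isIntegral_iff.mp hint
    have : (y : ℚ) = 1/2 := hy
    have h2 : ((2 * y : ℤ) : ℚ) = ((1 : ℤ) : ℚ) := by push_cast; linarith
    have := Int.cast_injective (α := ℚ) h2
    omega

lemma matrix_congruence_torsionfree {R : Type*} [CommRing R] [IsDomain R]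
    [IsNoetherianRing R] {m : Ideal R} (hm : m.IsMaximal) {n : ℕ}
    {x : Matrix (Fin n) (Fin n) R} (hx : ∀ i j, x i j ∈ m) {ℓ : ℕ}
    (hℓ : (ℓ : R) ∉ m) (hpow : (1 + x) ^ ℓ = 1) : x = 0 := by
  classical
  by_contra hx0
  have hex : ∃ i j, x i j ≠ 0 := by
    by_contra h
    push_neg at h
    exact hx0 (by ext i j; simp [h i j])
  obtain ⟨i₀, j₀, hij⟩ := hex
  have hℓ0 : ℓ ≠ 0 := by
    rintro rfl
    exact hℓ (by simpa using m.zero_mem)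
  have hradm : m.radical = m := hm.isPrime.radical
  have hbot : (⨅ k : ℕ, m ^ k) = ⊥ := Ideal.iInf_pow_eq_bot_of_isDomain m hm.ne_top
  have hPex : ∃ N, ¬ ∀ i j, x i j ∈ m ^ N := by
    by_contra h
    push_neg at h
    have : x i₀ j₀ ∈ (⨅ k : ℕ, m ^ k) := Ideal.mem_iInf.mpr fun k => h k i₀ j₀
    rw [hbot] at this
    exact hij this
  set N₀ := Nat.find hPex with hN₀def
  have hN₀spec : ¬ ∀ i j, x i j ∈ m ^ N₀ := Nat.find_spec hPex
  have hlow : ∀ j < N₀, ∀ i j', x i j' ∈ m ^ j := by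
    intro j hj i j'
    have := Nat.find_min hPex hj
    push_neg at this
    exact this i j'
  have hN₀ne0 : N₀ ≠ 0 := by
    intro h
    exact hN₀spec (by rw [h]; intro i j; simp)
  have hN₀ne1 : N₀ ≠ 1 := by
    intro h
    exact hN₀spec (by rw [h]; intro i j; simpa using hx i j)
  set k := N₀ - 1 with hkdef
  have hk1 : 1 ≤ k := by omega
  have hTk : ∀ i j, x i j ∈ m ^ k := hlow k (by omega)
  have hTk1 : ¬ ∀ i j, x i j ∈ m ^ (k + 1) := by
    have : k + 1 = N₀ := by omega
    rw [this]; exact hN₀spec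
  -- entries of powers of x
  have hxp : ∀ jj, 2 ≤ jj → ∀ i j, (x ^ jj) i j ∈ m ^ (k + k) := by
    intro jj hjj
    induction jj, hjj using Nat.le_induction with
    | base =>
      intro i j
      rw [pow_two, Matrix.mul_apply]
      refine Ideal.sum_mem _ fun l _ => ?_
      rw [pow_add]
      exact Ideal.mul_mem_mul (hTk i l) (hTk l j)
    | succ jj hjj ih =>
      intro i j
      rw [pow_succ, Matrix.mul_apply]
      exact Ideal.sum_mem _ fun l _ => Ideal.mul_mem_right _ _ (ih i l)
  -- binomial expansion
  have hexp := (Commute.one_right x).add_pow ℓ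
  have hf : ∀ jj, x ^ jj * 1 ^ (ℓ - jj) * ((ℓ.choose jj : ℕ) : Matrix (Fin n) (Fin n) R)
      = (ℓ.choose jj) • x ^ jj := by
    intro jj
    rw [one_pow, mul_one, nsmul_eq_mul']
  rw [add_comm x 1, hpow] at hexp
  simp only [hf] at hexp
  have hexp' : (1 : Matrix (Fin n) (Fin n) R)
      = ∑ jj ∈ Finset.Ico 0 2, (ℓ.choose jj) • x ^ jj
        + ∑ jj ∈ Finset.Ico 2 (ℓ + 1), (ℓ.choose jj) • x ^ jj := by
    rw [Finset.sum_Ico_consecutive _ (by omega : 0 ≤ 2) (by omega : 2 ≤ ℓ + 1)]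
    rw [← Finset.range_eq_Ico]
    exact hexp
  have h02 : ∑ jj ∈ Finset.Ico 0 2, (ℓ.choose jj) • x ^ jj = 1 + ℓ • x := by
    rw [Nat.Ico_zero_eq_range]
    rw [Finset.sum_range_succ, Finset.sum_range_one]
    simp [Nat.choose_one_right]
  rw [h02] at hexp'
  have hS : ℓ • x + ∑ jj ∈ Finset.Ico 2 (ℓ + 1), (ℓ.choose jj) • x ^ jj = 0 := by
    have h := hexp'
    rw [add_assoc] at h
    exact left_eq_add.mp h
  have key : ∀ i j, x i j * (ℓ : R) ∈ m ^ (k + k) := by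
    intro i j
    have h1 : (ℓ • x) i j = -((∑ jj ∈ Finset.Ico 2 (ℓ + 1), (ℓ.choose jj) • x ^ jj) i j) := by
      have := congrFun (congrFun (eq_neg_of_add_eq_zero_left hS) i) j
      exact this
    have h2 : ((∑ jj ∈ Finset.Ico 2 (ℓ + 1), (ℓ.choose jj) • x ^ jj) i j) ∈ m ^ (k + k) := by
      rw [Matrix.sum_apply]
      refine Ideal.sum_mem _ fun jj hjj => ?_
      rw [Matrix.smul_apply]
      exact nsmul_mem (hxp jj (Finset.mem_Ico.mp hjj).1 i j) _
    have h3 : (ℓ • x) i j ∈ m ^ (k + k) := by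
      rw [h1]; exact neg_mem h2
    rw [Matrix.smul_apply, nsmul_eq_mul'] at h3
    exact h3
  have hprim : (m ^ (k + k)).IsPrimary := by
    apply Ideal.isPrimary_of_isMaximal_radical
    rw [Ideal.radical_pow _ (by omega : k + k ≠ 0), hradm]
    exact hm
  have hall : ∀ i j, x i j ∈ m ^ (k + 1) := by
    intro i j
    rcases (Ideal.isPrimary_iff.mp hprim).2 (key i j) with h | h
    · exact Ideal.pow_le_pow_right (by omega : k + 1 ≤ k + k) h
    · rw [Ideal.radical_pow _ (by omega : k + k ≠ 0), hradm] at h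
      exact absurd h hℓ
  exact hTk1 hall

/-- Residue fields of maximal ideals of finite type ℤ-algebras are finite, of prime
characteristic. -/
lemma residue_finite_charprime {A : Type*} [CommRing A] [Algebra.FiniteType ℤ A]
    (m : Ideal A) (hm : m.IsMaximal) :
    Finite (A ⧸ m) ∧ (ringChar (A ⧸ m)).Prime := by
  haveI := hm
  haveI := int_isJacobsonRing
  letI : Field (A ⧸ m) := Ideal.Quotient.field m
  haveI : Algebra.FiniteType ℤ (A ⧸ m) :=
    Algebra.FiniteType.of_surjective (Ideal.Quotient.mkₐ ℤ m)
      (Ideal.Quotient.mkₐ_surjective ℤ m)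
  haveI : Module.Finite ℤ (A ⧸ m) := finite_of_finite_type_of_isJacobsonRing ℤ _
  haveI hfin : Finite (A ⧸ m) := finite_of_field_moduleFinite_int _
  refine ⟨hfin, ?_⟩
  haveI : CharP (A ⧸ m) (ringChar (A ⧸ m)) := ringChar.charP _
  rcases CharP.char_is_prime_or_zero (A ⧸ m) (ringChar (A ⧸ m)) with h | h
  · exact h
  · exact absurd h (CharP.char_ne_zero_of_finite (A ⧸ m) _)


/-- Main auxiliary lemma: a torsion group embedding into `GL_n` of a finitely generated
characteristic-zero Noetherian domain is finite. -/
lemma torsion_finite_of_embedding {A : Type*} [CommRing A] [IsDomain A] [IsNoetherianRing A]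
    [Algebra.FiniteType ℤ A] [CharZero A] {n : ℕ} {G : Type*} [Group G]
    (htor : Monoid.IsTorsion G) (φ : G →* (Matrix (Fin n) (Fin n) A)ˣ)
    (hφ : Function.Injective φ) : Finite G := by
  classical
  haveI := int_isJacobsonRing
  haveI : IsJacobsonRing A := isJacobsonRing_of_finiteType (A := ℤ)
  -- two maximal ideals with distinct residue characteristics
  have hmax : ∃ m₁ m₂ : Ideal A, m₁.IsMaximal ∧ m₂.IsMaximal ∧
      ringChar (A ⧸ m₁) ≠ ringChar (A ⧸ m₂) := by
    obtain ⟨m₀, hm₀⟩ := Ideal.exists_maximal A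
    by_contra hcon
    push_neg at hcon
    set p := ringChar (A ⧸ m₀) with hpdef
    have hp : p.Prime := (residue_finite_charprime m₀ hm₀).2
    have hmem : ∀ m : Ideal A, m.IsMaximal → (p : A) ∈ m := by
      intro m hm
      have hc : ringChar (A ⧸ m) = p := hcon m m₀ hm hm₀
      haveI : CharP (A ⧸ m) (ringChar (A ⧸ m)) := ringChar.charP _
      have hz : ((p : A ⧸ m)) = 0 := by
        rw [← hc]; exact CharP.cast_eq_zero _ _
      rwa [← map_natCast (Ideal.Quotient.mk m), Ideal.Quotient.eq_zero_iff_mem] at hz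
    have hjac : (p : A) ∈ (⊥ : Ideal A).jacobson := by
      rw [Ideal.jacobson]
      exact Ideal.mem_sInf.mpr fun J hJ => hmem J hJ.2
    rw [isJacobsonRing_iff_prime_eq.mp ‹IsJacobsonRing A› ⊥ Ideal.bot_prime] at hjac
    have : (p : A) = 0 := hjac
    rw [Nat.cast_eq_zero] at this
    exact hp.ne_zero this
  obtain ⟨m₁, m₂, hm₁, hm₂, hne⟩ := hmax
  obtain ⟨hfin₁, hp₁⟩ := residue_finite_charprime m₁ hm₁
  obtain ⟨hfin₂, hp₂⟩ := residue_finite_charprime m₂ hm₂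
  haveI := hfin₁
  haveI := hfin₂
  set π₁ : (Matrix (Fin n) (Fin n) A)ˣ →* (Matrix (Fin n) (Fin n) (A ⧸ m₁))ˣ :=
    Units.map ((Ideal.Quotient.mk m₁).mapMatrix.toMonoidHom) with hπ₁def
  set π₂ : (Matrix (Fin n) (Fin n) A)ˣ →* (Matrix (Fin n) (Fin n) (A ⧸ m₂))ˣ :=
    Units.map ((Ideal.Quotient.mk m₂).mapMatrix.toMonoidHom) with hπ₂def
  set ψ := ((π₁.comp φ).prod (π₂.comp φ)) with hψdef
  have hker : ∀ g : G, ψ g = 1 → g = 1 := by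
    intro g hg
    by_contra hg1
    set d := orderOf g with hddef
    have hd0 : 0 < d := (htor g).orderOf_pos
    have hd1 : d ≠ 1 := fun h => hg1 (orderOf_eq_one_iff.mp h)
    obtain ⟨ℓ, hℓp, hℓd⟩ := Nat.exists_prime_and_dvd hd1
    set h := g ^ (d / ℓ) with hhdef
    have hdl0 : d / ℓ ≠ 0 := by
      have := Nat.div_pos (Nat.le_of_dvd hd0 hℓd) hℓp.pos
      omega
    have hordh : orderOf h = ℓ := by
      rw [hhdef, orderOf_pow' _ hdl0, ← hddef,
        Nat.gcd_eq_right (Nat.div_dvd_of_dvd hℓd), Nat.div_div_self hℓd (by omega)]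
    have hh1 : h ≠ 1 := by
      intro hcontra
      rw [hcontra, orderOf_one] at hordh
      exact absurd hordh.symm hℓp.one_lt.ne'
    have hψh : ψ h = 1 := by rw [hhdef, map_pow, hg, one_pow]
    have hφpow : ((φ h).val) ^ ℓ = 1 := by
      have : (φ h) ^ ℓ = 1 := by rw [← map_pow, ← hordh, pow_orderOf_eq_one, map_one]
      calc ((φ h).val) ^ ℓ = ((φ h) ^ ℓ).val := (Units.val_pow_eq_pow_val _ _).symm
        _ = 1 := by rw [this]; rfl
    have hchar : ∀ (m : Ideal A), m.IsMaximal → (ringChar (A ⧸ m)).Prime →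
        (Units.map ((Ideal.Quotient.mk m).mapMatrix.toMonoidHom)) (φ h) = 1 →
        ℓ = ringChar (A ⧸ m) := by
      intro m hm hprime hone
      by_contra hlp
      have hlnotin : ((ℓ : ℕ) : A) ∉ m := by
        intro hmem
        haveI : CharP (A ⧸ m) (ringChar (A ⧸ m)) := ringChar.charP _
        have hz : ((ℓ : ℕ) : A ⧸ m) = 0 := by
          rw [← map_natCast (Ideal.Quotient.mk m)]
          exact Ideal.Quotient.eq_zero_iff_mem.mpr hmem
        rw [CharP.cast_eq_zero_iff (A ⧸ m) (ringChar (A ⧸ m))] at hz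
        exact hlp ((Nat.prime_dvd_prime_iff_eq hprime hℓp).mp hz).symm
      have hx : ∀ i j, (((φ h).val - 1) i j) ∈ m := by
        intro i j
        have hval : (Ideal.Quotient.mk m).mapMatrix ((φ h).val) = 1 := congrArg Units.val hone
        have hentry : (Ideal.Quotient.mk m) (((φ h).val) i j)
            = (1 : Matrix (Fin n) (Fin n) (A ⧸ m)) i j := by
          rw [← hval]; rfl
        have h1entry : (Ideal.Quotient.mk m) ((1 : Matrix (Fin n) (Fin n) A) i j)
            = (1 : Matrix (Fin n) (Fin n) (A ⧸ m)) i j := by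
          rw [Matrix.one_apply, Matrix.one_apply]
          split_ifs <;> simp
        rw [← Ideal.Quotient.eq_zero_iff_mem, Matrix.sub_apply, map_sub, hentry, h1entry, sub_self]
      have hpoweq : (1 + ((φ h).val - 1)) ^ ℓ = 1 := by
        rw [add_sub_cancel]
        exact hφpow
      have hzero := matrix_congruence_torsionfree hm hx hlnotin hpoweq
      rw [sub_eq_zero] at hzero
      exact hh1 (hφ (by rw [map_one]; exact Units.ext hzero))
    have e1 : ℓ = ringChar (A ⧸ m₁) := by
      apply hchar m₁ hm₁ hp₁
      have := congrArg Prod.fst hψh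
      exact this
    have e2 : ℓ = ringChar (A ⧸ m₂) := by
      apply hchar m₂ hm₂ hp₂
      have := congrArg Prod.snd hψh
      exact this
    exact hne (e1 ▸ e2)
  have hinj : Function.Injective ψ := (injective_iff_map_eq_one ψ).mpr hker
  exact Finite.of_injective ψ hinj

set_option maxHeartbeats 2000000 in
set_option synthInstance.maxHeartbeats 1000000 in
/-- Burnside–Schur: every finitely generated torsion subgroup of
`GL(n, ℂ)` is finite. -/
theorem stmt_17 (n : ℕ) (G : Subgroup (Matrix.GeneralLinearGroup (Fin n) ℂ))
    (hfg : Group.FG G) (htor : Monoid.IsTorsion G) : Finite G := by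
  classical
  haveI := int_isJacobsonRing
  obtain ⟨S, hS⟩ := hfg.out
  -- the finitely generated ring of matrix entries
  set s : Set ℂ := ⋃ g ∈ (S : Set G), ((Set.range fun p : Fin n × Fin n =>
      ((g : Matrix.GeneralLinearGroup (Fin n) ℂ)).val p.1 p.2) ∪
      (Set.range fun p : Fin n × Fin n =>
      (((g : Matrix.GeneralLinearGroup (Fin n) ℂ))⁻¹).val p.1 p.2)) with hsdef
  have hsfin : s.Finite :=
    Set.Finite.biUnion S.finite_toSet
      (fun g _ => (Set.finite_range _).union (Set.finite_range _))
  set R₀ : Subalgebra ℤ ℂ := Algebra.adjoin ℤ s with hR₀def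
  have hfgR : R₀.FG := ⟨hsfin.toFinset, by rw [Set.Finite.coe_toFinset]⟩
  haveI : Algebra.FiniteType ℤ R₀ := (Subalgebra.fg_iff_finiteType _).mp hfgR
  haveI : IsNoetherianRing R₀ := Algebra.FiniteType.isNoetherianRing ℤ R₀
  haveI : IsJacobsonRing R₀ := isJacobsonRing_of_finiteType (A := ℤ)
  -- the subgroup of GL with entries (and inverse entries) in R₀
  set H : Subgroup (Matrix.GeneralLinearGroup (Fin n) ℂ) :=
    { carrier := {A | (∀ i j, A.val i j ∈ R₀) ∧ ∀ i j, (A⁻¹).val i j ∈ R₀}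
      one_mem' := by
        have hone : ∀ i j : Fin n, (1 : Matrix.GeneralLinearGroup (Fin n) ℂ).val i j ∈ R₀ := by
          intro i j
          show (1 : Matrix (Fin n) (Fin n) ℂ) i j ∈ R₀
          rw [Matrix.one_apply]
          split_ifs
          exacts [R₀.one_mem, R₀.zero_mem]
        exact ⟨hone, by simpa only [inv_one] using hone⟩
      mul_mem' := by
        rintro A B ⟨hA, hA'⟩ ⟨hB, hB'⟩
        constructor
        · intro i j
          rw [Units.val_mul, Matrix.mul_apply]
          exact Subalgebra.sum_mem _ fun l _ => R₀.mul_mem (hA i l) (hB l j)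
        · intro i j
          rw [mul_inv_rev, Units.val_mul, Matrix.mul_apply]
          exact Subalgebra.sum_mem _ fun l _ => R₀.mul_mem (hB' i l) (hA' l j)
      inv_mem' := by
        rintro A ⟨h1, h2⟩
        refine ⟨h2, ?_⟩
        simpa only [inv_inv] using h1 } with hHdef
  have hGH : ∀ g : G, (g : Matrix.GeneralLinearGroup (Fin n) ℂ) ∈ H := by
    intro g
    have hg : (g : Matrix.GeneralLinearGroup (Fin n) ℂ) ∈ Subgroup.map G.subtype ⊤ :=
      ⟨g, trivial, rfl⟩
    rw [← hS, MonoidHom.map_closure] at hg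
    refine Subgroup.closure_le H |>.mpr ?_ hg
    rintro _ ⟨g₀, hg₀, rfl⟩
    constructor
    · intro i j
      apply Algebra.subset_adjoin
      exact Set.mem_biUnion hg₀ (Or.inl ⟨(i, j), rfl⟩)
    · intro i j
      apply Algebra.subset_adjoin
      exact Set.mem_biUnion hg₀ (Or.inr ⟨(i, j), rfl⟩)
  clear hR₀def
  clear_value R₀
  -- entry matrices over R₀
  set e : G → Matrix (Fin n) (Fin n) R₀ :=
    fun g i j => ⟨(g : Matrix.GeneralLinearGroup (Fin n) ℂ).val i j, (hGH g).1 i j⟩ with hedef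
  have he1 : e 1 = 1 := by
    ext i j
    show ((1 : Matrix.GeneralLinearGroup (Fin n) ℂ).val i j : ℂ) = ((1 : Matrix (Fin n) (Fin n) R₀) i j : ℂ)
    rw [Matrix.one_apply]
    show (1 : Matrix (Fin n) (Fin n) ℂ) i j = _
    rw [Matrix.one_apply]
    split_ifs <;> simp
  have hmul : ∀ g h : G, e (g * h) = e g * e h := by
    intro g h
    ext i j
    show ((g * h : G) : Matrix.GeneralLinearGroup (Fin n) ℂ).val i j = ((e g * e h) i j : ℂ)
    have hcoe : ((g * h : G) : Matrix.GeneralLinearGroup (Fin n) ℂ)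
        = (g : Matrix.GeneralLinearGroup (Fin n) ℂ) * (h : Matrix.GeneralLinearGroup (Fin n) ℂ) := rfl
    rw [hcoe, Units.val_mul, Matrix.mul_apply, Matrix.mul_apply]
    push_cast
    rfl
  have heinj : ∀ g : G, e g = 1 → g = 1 := by
    intro g hg
    have : ∀ i j, (g : Matrix.GeneralLinearGroup (Fin n) ℂ).val i j
        = (1 : Matrix (Fin n) (Fin n) ℂ) i j := by
      intro i j
      calc (g : Matrix.GeneralLinearGroup (Fin n) ℂ).val i j
          = ((e g i j : R₀) : ℂ) := rfl
        _ = (((1 : Matrix (Fin n) (Fin n) R₀) i j : R₀) : ℂ) := by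
              rw [congrFun (congrFun hg i) j]
        _ = (1 : Matrix (Fin n) (Fin n) ℂ) i j := by
              rw [Matrix.one_apply, Matrix.one_apply]
              split_ifs <;> simp
    have hval : (g : Matrix.GeneralLinearGroup (Fin n) ℂ).val = 1 := by
      ext i j; exact this i j
    have : (g : Matrix.GeneralLinearGroup (Fin n) ℂ) = 1 := Units.ext hval
    exact Subtype.ext this
  -- the monoid hom into matrices over R₀ (valued in units)
  set χ : G →* (Matrix (Fin n) (Fin n) R₀)ˣ :=
    { toFun := fun g => ⟨e g, e g⁻¹,
        by rw [← hmul, mul_inv_cancel, he1], by rw [← hmul, inv_mul_cancel, he1]⟩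
      map_one' := Units.ext he1
      map_mul' := fun g h => Units.ext (hmul g h) } with hχdef
  have hχinj : Function.Injective χ := by
    rw [injective_iff_map_eq_one]
    intro g hg
    exact heinj g (congrArg Units.val hg)
  exact torsion_finite_of_embedding htor χ hχinj
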